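/- Suppose every node of a set A ⊆ ℤ² of type α has at least τ_α(2w+1)² neighbours of type α within N(u) ∩ A at stage 0 (i.e., A is an α-stable structure). Then under the Schelling dynamics—where at each stage every currently 'hopeful' node (unhappy, but happy if it switched type) switches type—no node of type α belonging to A ever changes type, at any stage; the proof is by induction on stages. -/

import Mathlib

/-- The ℓ∞-ball (neighbourhood) of radius `w` about `v` in `ℤ²`, as a finite set;
it contains `(2w+1)²` nodes, including `v` itself. -/
noncomputable def ball (v : ℤ × ℤ) (w : ℕ) : Finset (ℤ × ℤ) :=
  Finset.Icc (v.1 - w) (v.1 + w) ×ˢ Finset.Icc (v.2 - w) (v.2 + w)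

/-- Number of type-α nodes (`true`) of the configuration `c` in the neighbourhood of `v`. -/
noncomputable def alphaCount (c : ℤ × ℤ → Bool) (w : ℕ) (v : ℤ × ℤ) : ℕ :=
  Set.ncard {x : ℤ × ℤ | x ∈ ball v w ∧ c x = true}

/-- Number of type-β nodes (`false`) of the configuration `c` in the neighbourhood of `v`. -/
noncomputable def betaCount (c : ℤ × ℤ → Bool) (w : ℕ) (v : ℤ × ℤ) : ℕ :=
  Set.ncard {x : ℤ × ℤ | x ∈ ball v w ∧ c x = false}

/-- A node is happy if the proportion of its own type in its neighbourhood meets its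
intolerance threshold (`τα` for α-nodes, `τβ` for β-nodes). -/
noncomputable def Happy (τα τβ : ℝ) (w : ℕ) (c : ℤ × ℤ → Bool) (v : ℤ × ℤ) : Prop :=
  if c v = true then τα * (2*w + 1)^2 ≤ (alphaCount c w v : ℝ)
  else τβ * (2*w + 1)^2 ≤ (betaCount c w v : ℝ)

/-- A node is hopeful if it is unhappy, but would be happy if it (alone) switched type. -/
noncomputable def Hopeful (τα τβ : ℝ) (w : ℕ) (c : ℤ × ℤ → Bool) (v : ℤ × ℤ) : Prop :=
  ¬ Happy τα τβ w c v ∧ Happy τα τβ w (Function.update c v (! c v)) v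

/-!
The α-nodes of `A` support one another. As long as all of them are still of type α, each
has at least its initial support inside `A`, hence is happy, and a happy node is not hopeful,
so it does not switch; induction on the stage finishes the argument.
-/

section Schelling

variable {τα τβ : ℝ} {w : ℕ}

theorem happy_of_le_alphaCount {c : ℤ × ℤ → Bool} {v : ℤ × ℤ} (hv : c v = true)
    (h : τα * (2*w + 1)^2 ≤ (alphaCount c w v : ℝ)) : Happy τα τβ w c v := by
  rwa [Happy, if_pos hv]

theorem ncard_ball_inter_le_alphaCount {c : ℤ × ℤ → Bool} {S : Set (ℤ × ℤ)}
    (hS : ∀ x ∈ S, c x = true) (v : ℤ × ℤ) :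
    Set.ncard {x : ℤ × ℤ | x ∈ ball v w ∧ x ∈ S} ≤ alphaCount c w v :=
  Set.ncard_le_ncard (fun x ⟨hb, hx⟩ => ⟨hb, hS x hx⟩)
    ((ball v w).finite_toSet.subset fun _ hx => hx.1)

theorem next_eq_of_happy {χ : ℕ → ℤ × ℤ → Bool}
    (hdyn : ∀ s v, χ (s+1) v ≠ χ s v → Hopeful τα τβ w (χ s) v) {s : ℕ} {v : ℤ × ℤ}
    (h : Happy τα τβ w (χ s) v) : χ (s+1) v = χ s v :=
  not_ne_iff.mp fun hne => (hdyn s v hne).1 h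

end Schelling

theorem alpha_stable_never_changes_general (τα τβ : ℝ) (w : ℕ)
    (A : Set (ℤ × ℤ)) (χ : ℕ → ℤ × ℤ → Bool)
    (hdyn : ∀ s v, χ (s+1) v ≠ χ s v → Hopeful τα τβ w (χ s) v)
    (hstable : ∀ v ∈ A, χ 0 v = true →
      τα * (2*w + 1)^2 ≤ (Set.ncard {x : ℤ × ℤ | x ∈ ball v w ∧ x ∈ A ∧ χ 0 x = true} : ℝ)) :
    ∀ s, ∀ v ∈ A, χ 0 v = true → χ s v = true := by
  intro s
  induction s with
  | zero => exact fun _ _ h0 => h0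
  | succ s ih =>
    intro v hv h0
    have hsupport : Set.ncard {x | x ∈ ball v w ∧ x ∈ A ∧ χ 0 x = true} ≤ alphaCount (χ s) w v :=
      ncard_ball_inter_le_alphaCount (S := {x | x ∈ A ∧ χ 0 x = true})
        (fun x hx => ih x hx.1 hx.2) v
    have hhappy : Happy τα τβ w (χ s) v :=
      happy_of_le_alphaCount (ih v hv h0) ((hstable v hv h0).trans (by exact_mod_cast hsupport))
    rw [next_eq_of_happy hdyn hhappy, ih v hv h0]

/-- If `A` is an α-stable structure at stage 0 — every α-node of `A` has at least
`τα(2w+1)²` α-nodes in `N(v) ∩ A` — then under any Schelling dynamics in which only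
hopeful nodes ever switch type, no α-node of `A` ever changes type. -/
theorem alpha_stable_never_changes (τα τβ : ℝ) (w : ℕ) (hw : 1 ≤ w)
    (A : Set (ℤ × ℤ)) (χ : ℕ → ℤ × ℤ → Bool)
    (hdyn : ∀ s v, χ (s+1) v ≠ χ s v → Hopeful τα τβ w (χ s) v)
    (hstable : ∀ v ∈ A, χ 0 v = true →
      τα * (2*w + 1)^2 ≤ (Set.ncard {x : ℤ × ℤ | x ∈ ball v w ∧ x ∈ A ∧ χ 0 x = true} : ℝ)) :
    ∀ s, ∀ v ∈ A, χ 0 v = true → χ s v = true :=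
  alpha_stable_never_changes_general τα τβ w A χ hdyn hstable
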